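/- arXiv:2510.16609 — 4 statements merged into one kernel-verified Lean document; each statement's English description precedes it below -/
import Mathlib

section
/- Let n ≥ 2, p ∈ (0,1), α ∈ (0, 1/5], γ ∈ (0,1], let C ⊆ {1,…,n} be a fixed set of size c with c ≥ γn/2, and let G* ∼ G(n,p) be an Erdős–Rényi random graph. Then with probability at least 1 − n·exp(−α²(n−1)p/3) − n·exp(−α²cp/3), every vertex u ∉ C satisfies |N_{G*}(u)| ≤ (1+α)(n−1)p and |N_{G*}(u) ∩ C| ≥ (1−α)cp, and consequently |N_{G*}(u) ∩ C| ≥ (γ/3)·|N_{G*}(u)|. -/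
/-- The number of edges of a simple graph on `Fin n`. -/
noncomputable def edgeCount {n : ℕ} (G : SimpleGraph (Fin n)) : ℕ :=
  letI : DecidableRel G.Adj := Classical.decRel _
  G.edgeFinset.card

/-- The probability, under the Erdős–Rényi random graph measure `G(n, p)` (each of the
`n.choose 2` possible edges present independently with probability `p`), of a set `A` of
graphs: each graph `G` has probability `p ^ |E(G)| * (1 - p) ^ (C(n,2) - |E(G)|)`. -/
noncomputable def erProb (n : ℕ) (p : ℝ) (A : Set (SimpleGraph (Fin n))) : ℝ :=
  ∑ G : SimpleGraph (Fin n),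
    Set.indicator A (fun G => p ^ edgeCount G * (1 - p) ^ (n.choose 2 - edgeCount G)) G

/-- The neighborhood (as a finite set) of vertex `u` in a simple graph `G` on `Fin n`. -/
noncomputable def nbrFinset {n : ℕ} (G : SimpleGraph (Fin n)) (u : Fin n) : Finset (Fin n) :=
  letI : DecidableRel G.Adj := Classical.decRel _
  G.neighborFinset u

/-!
A graph on `Fin n` is a subset of the edges of `K_n`, and the `G(n, p)` weight is a product
over those edges, so for `u ∉ D` the variable `|N(u) ∩ D|` has the binomial generating function
`(1 - p + p r) ^ |D|`. The exponential Markov inequality with `r = e^{±α}`, together with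
`e^t ≤ 1 + t + 2t²/3` for `|t| ≤ 1/5`, gives both Chernoff tails with exponent `α²|D|p/3`.
A union bound over the `2n` bad events leaves every `u ∉ C` with
`|N(u)| ≤ (1+α)(n-1)p` and `|N(u) ∩ C| ≥ (1-α)cp ≥ (1-α)γnp/2`; since
`(1+α)/3 ≤ (1-α)/2` for `α ≤ 1/5`, this gives `|N(u) ∩ C| ≥ (γ/3)|N(u)|`.
-/

open Finset Real

section Powerset

variable {ι : Type*} [DecidableEq ι]

theorem sum_powerset_pow_mul_pow_mul_prod (S : Finset ι) (p : ℝ) (g : ι → ℝ) :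
    ∑ F ∈ S.powerset, p ^ #F * (1 - p) ^ (#S - #F) * ∏ e ∈ F, g e =
      ∏ e ∈ S, (1 - p + p * g e) := by
  rw [prod_congr rfl fun e _ => add_comm (1 - p) (p * g e), prod_add]
  refine sum_congr rfl fun F hF => ?_
  rw [prod_mul_distrib, prod_const, prod_const, card_sdiff_of_subset (mem_powerset.1 hF)]
  ring

theorem sum_powerset_pow_mul_pow_mul_pow_card_inter {S T : Finset ι} (hT : T ⊆ S) (p r : ℝ) :
    ∑ F ∈ S.powerset, p ^ #F * (1 - p) ^ (#S - #F) * r ^ #(F ∩ T) = (1 - p + p * r) ^ #T := by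
  have h := sum_powerset_pow_mul_pow_mul_prod S p (fun e => if e ∈ T then r else 1)
  have hfactor : ∀ e,
      1 - p + p * (if e ∈ T then r else 1) = if e ∈ T then 1 - p + p * r else 1 := fun e => by
    split_ifs <;> ring
  simp only [prod_ite_mem, prod_const, hfactor, inter_eq_right.2 hT] at h
  exact h

end Powerset

namespace SimpleGraph

variable {V : Type*} [Fintype V] [DecidableEq V]

open scoped Classical in
theorem sum_comp_edgeFinset (f : Finset (Sym2 V) → ℝ) :
    ∑ G : SimpleGraph V, f G.edgeFinset = ∑ F ∈ (⊤ : SimpleGraph V).edgeFinset.powerset, f F := by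
  refine sum_nbij' (fun G => G.edgeFinset) (fun F => fromEdgeSet F) ?_ ?_ ?_ ?_ ?_
  · exact fun G _ => mem_powerset.2 (edgeFinset_mono le_top)
  · exact fun F _ => mem_univ _
  · intro G _
    simp
  · intro F hF
    ext e
    have hdiag : e ∈ F → ¬e.IsDiag := fun he => by simpa using mem_powerset.1 hF he
    simpa using hdiag
  · exact fun G _ => rfl

end SimpleGraph

theorem Real.exp_le_one_add_add_two_thirds_mul_sq {t : ℝ} (ht : |t| ≤ 1 / 5) :
    exp t ≤ 1 + t + 2 / 3 * t ^ 2 := by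
  have hbound := Real.exp_bound (x := t) (by linarith) (n := 3) (by norm_num)
  have htaylor : ∑ m ∈ range 3, t ^ m / m.factorial = 1 + t + t ^ 2 / 2 := by
    simp [sum_range_succ]
  rw [htaylor] at hbound
  have hcube : |t| ^ 3 ≤ t ^ 2 * (1 / 5) := by
    rw [pow_succ, sq_abs]
    exact mul_le_mul_of_nonneg_left ht (sq_nonneg t)
  norm_num [Nat.factorial] at hbound
  nlinarith [(abs_le.1 hbound).2, sq_nonneg t]

theorem sum_indicator_le_exp_neg_mul_sum_mul_exp {Ω : Type*} [Fintype Ω] {w : Ω → ℝ}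
    (hw : 0 ≤ w) (X : Ω → ℝ) (a : ℝ) :
    ∑ ω, {ω | a ≤ X ω}.indicator w ω ≤ exp (-a) * ∑ ω, w ω * exp (X ω) := by
  rw [mul_sum]
  refine sum_le_sum fun ω _ => ?_
  by_cases hω : ω ∈ {ω | a ≤ X ω}
  · rw [Set.indicator_of_mem hω, mul_left_comm, ← exp_add]
    exact le_mul_of_one_le_right (hw ω) (one_le_exp (by linarith [show a ≤ X ω from hω]))
  · rw [Set.indicator_of_notMem hω]
    exact mul_nonneg (exp_pos _).le (mul_nonneg (hw ω) (exp_pos _).le)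

theorem sum_indicator_le_exp_of_sum_mul_exp_pow {Ω : Type*} [Fintype Ω] {w : Ω → ℝ}
    (hw : 0 ≤ w) (X : Ω → ℕ) {m : ℕ} {p t : ℝ} (hp0 : 0 ≤ p) (hp1 : p ≤ 1) (ht : |t| ≤ 1 / 5)
    (hmgf : ∑ ω, w ω * exp t ^ X ω = (1 - p + p * exp t) ^ m) :
    ∑ ω, {ω | t * (1 + t) * m * p ≤ X ω * t}.indicator w ω ≤ exp (-t ^ 2 * m * p / 3) := by
  calc ∑ ω, {ω | t * (1 + t) * m * p ≤ X ω * t}.indicator w ω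
      ≤ exp (-(t * (1 + t) * m * p)) * ∑ ω, w ω * exp (X ω * t) :=
        sum_indicator_le_exp_neg_mul_sum_mul_exp hw _ _
    _ = exp (-(t * (1 + t) * m * p)) * (1 - p + p * exp t) ^ m := by
        simp only [exp_nat_mul, hmgf]
    _ ≤ exp (-(t * (1 + t) * m * p)) * exp (p * (exp t - 1)) ^ m := by
        gcongr
        linarith [add_one_le_exp (p * (exp t - 1))]
    _ = exp (-(t * (1 + t) * m * p) + m * p * (exp t - 1)) := by
        rw [← exp_nat_mul, ← exp_add]
        ring_nf
    _ ≤ exp (-t ^ 2 * m * p / 3) := by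
        have hmp : 0 ≤ (m : ℝ) * p := by positivity
        gcongr
        nlinarith [mul_le_mul_of_nonneg_left (exp_le_one_add_add_two_thirds_mul_sq ht) hmp]

noncomputable def erWeight (n : ℕ) (p : ℝ) (G : SimpleGraph (Fin n)) : ℝ :=
  p ^ edgeCount G * (1 - p) ^ (n.choose 2 - edgeCount G)

section ErdosRenyi

variable {n : ℕ} {p α : ℝ}

theorem erWeight_nonneg (hp0 : 0 ≤ p) (hp1 : p ≤ 1) (G : SimpleGraph (Fin n)) :
    0 ≤ erWeight n p G :=
  mul_nonneg (pow_nonneg hp0 _) (pow_nonneg (sub_nonneg.2 hp1) _)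

open scoped Classical in
theorem sum_erWeight_mul_pow_card_edgeFinset_inter {T : Finset (Sym2 (Fin n))}
    (hT : T ⊆ (⊤ : SimpleGraph (Fin n)).edgeFinset) (r : ℝ) :
    ∑ G, erWeight n p G * r ^ #(G.edgeFinset ∩ T) = (1 - p + p * r) ^ #T := by
  rw [← sum_powerset_pow_mul_pow_mul_pow_card_inter hT p r,
    ← SimpleGraph.sum_comp_edgeFinset
      (fun F => p ^ #F * (1 - p) ^ (#(⊤ : SimpleGraph (Fin n)).edgeFinset - #F) * r ^ #(F ∩ T)),
    SimpleGraph.card_edgeFinset_top_eq_card_choose_two, Fintype.card_fin]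
  rfl

theorem sum_erWeight : ∑ G, erWeight n p G = 1 := by
  simpa using sum_erWeight_mul_pow_card_edgeFinset_inter (p := p) (empty_subset _) 1

theorem mem_nbrFinset {G : SimpleGraph (Fin n)} {u v : Fin n} :
    v ∈ nbrFinset G u ↔ G.Adj u v := by
  classical
  exact SimpleGraph.mem_neighborFinset G u v

open scoped Classical in
theorem edgeFinset_inter_image_eq_image_nbrFinset_inter (G : SimpleGraph (Fin n)) (u : Fin n)
    (D : Finset (Fin n)) :
    G.edgeFinset ∩ D.image (s(u, ·)) = (nbrFinset G u ∩ D).image (s(u, ·)) := by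
  ext e
  simp only [mem_inter, mem_image, SimpleGraph.mem_edgeFinset, mem_nbrFinset]
  constructor
  · rintro ⟨he, v, hv, rfl⟩
    exact ⟨v, ⟨he, hv⟩, rfl⟩
  · rintro ⟨v, ⟨hadj, hv⟩, rfl⟩
    exact ⟨hadj, v, hv, rfl⟩

theorem sum_erWeight_mul_pow_card_nbrFinset_inter {u : Fin n} {D : Finset (Fin n)} (hu : u ∉ D)
    (r : ℝ) : ∑ G, erWeight n p G * r ^ #(nbrFinset G u ∩ D) = (1 - p + p * r) ^ #D := by
  classical
  have hinj : Function.Injective (s(u, ·)) := fun _ _ => Sym2.congr_right.1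
  have hT : D.image (s(u, ·)) ⊆ (⊤ : SimpleGraph (Fin n)).edgeFinset := by
    intro e he
    obtain ⟨v, hv, rfl⟩ := mem_image.1 he
    simpa using ne_of_mem_of_not_mem hv hu |>.symm
  rw [← card_image_of_injective D hinj, ← sum_erWeight_mul_pow_card_edgeFinset_inter hT]
  simp only [edgeFinset_inter_image_eq_image_nbrFinset_inter, card_image_of_injective _ hinj]

theorem erProb_eq_sum_indicator (A : Set (SimpleGraph (Fin n))) :
    erProb n p A = ∑ G, A.indicator (erWeight n p) G :=
  rfl

theorem erProb_mono (hp0 : 0 ≤ p) (hp1 : p ≤ 1) {A B : Set (SimpleGraph (Fin n))} (h : A ⊆ B) :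
    erProb n p A ≤ erProb n p B :=
  sum_le_sum fun G _ =>
    Set.indicator_le_indicator_of_subset h (erWeight_nonneg hp0 hp1) G

theorem erProb_compl (A : Set (SimpleGraph (Fin n))) : erProb n p Aᶜ = 1 - erProb n p A := by
  rw [eq_sub_iff_add_eq, erProb_eq_sum_indicator, erProb_eq_sum_indicator, ← sum_add_distrib,
    ← sum_erWeight (p := p)]
  exact sum_congr rfl fun G _ => congrFun (Set.indicator_compl_add_self A _) G

theorem erProb_union_le (hp0 : 0 ≤ p) (hp1 : p ≤ 1) (A B : Set (SimpleGraph (Fin n))) :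
    erProb n p (A ∪ B) ≤ erProb n p A + erProb n p B := by
  rw [erProb_eq_sum_indicator, erProb_eq_sum_indicator, erProb_eq_sum_indicator,
    ← sum_add_distrib]
  refine sum_le_sum fun G _ => ?_
  rw [← Set.indicator_union_add_inter_apply]
  exact le_add_of_nonneg_right (Set.indicator_nonneg (fun G _ => erWeight_nonneg hp0 hp1 G) G)

theorem erProb_biUnion_le {κ : Type*} (hp0 : 0 ≤ p) (hp1 : p ≤ 1) (s : Finset κ)
    (A : κ → Set (SimpleGraph (Fin n))) :
    erProb n p (⋃ i ∈ s, A i) ≤ ∑ i ∈ s, erProb n p (A i) := by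
  classical
  induction s using Finset.induction_on with
  | empty => simp [erProb]
  | insert i s hi ih =>
    rw [set_biUnion_insert, sum_insert hi]
    exact (erProb_union_le hp0 hp1 _ _).trans (add_le_add_right ih _)

theorem erProb_lt_card_nbrFinset_inter_le (hp0 : 0 ≤ p) (hp1 : p ≤ 1) (hα0 : 0 ≤ α)
    (hα1 : α ≤ 1 / 5) {u : Fin n} {D : Finset (Fin n)} (hu : u ∉ D) :
    erProb n p {G | (1 + α) * #D * p < #(nbrFinset G u ∩ D)} ≤ exp (-α ^ 2 * #D * p / 3) := by
  refine (erProb_mono hp0 hp1 fun G hG => ?_).trans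
    (sum_indicator_le_exp_of_sum_mul_exp_pow (erWeight_nonneg hp0 hp1)
      (fun G => #(nbrFinset G u ∩ D)) hp0 hp1 (abs_le.2 ⟨by linarith, hα1⟩)
      (sum_erWeight_mul_pow_card_nbrFinset_inter hu _))
  have hG : (1 + α) * #D * p < #(nbrFinset G u ∩ D) := hG
  show α * (1 + α) * #D * p ≤ #(nbrFinset G u ∩ D) * α
  nlinarith

theorem erProb_card_nbrFinset_inter_lt_le (hp0 : 0 ≤ p) (hp1 : p ≤ 1) (hα0 : 0 ≤ α)
    (hα1 : α ≤ 1 / 5) {u : Fin n} {D : Finset (Fin n)} (hu : u ∉ D) :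
    erProb n p {G | #(nbrFinset G u ∩ D) < (1 - α) * #D * p} ≤ exp (-α ^ 2 * #D * p / 3) := by
  rw [← neg_sq]
  refine (erProb_mono hp0 hp1 fun G hG => ?_).trans
    (sum_indicator_le_exp_of_sum_mul_exp_pow (t := -α) (erWeight_nonneg hp0 hp1)
      (fun G => #(nbrFinset G u ∩ D)) hp0 hp1 (abs_le.2 ⟨by linarith, by linarith⟩)
      (sum_erWeight_mul_pow_card_nbrFinset_inter hu _))
  have hG : #(nbrFinset G u ∩ D) < (1 - α) * #D * p := hG
  show -α * (1 + -α) * #D * p ≤ #(nbrFinset G u ∩ D) * -α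
  nlinarith

theorem erProb_lt_card_nbrFinset_le (hp0 : 0 ≤ p) (hp1 : p ≤ 1) (hα0 : 0 ≤ α)
    (hα1 : α ≤ 1 / 5) (u : Fin n) :
    erProb n p {G | (1 + α) * ((n : ℝ) - 1) * p < #(nbrFinset G u)} ≤
      exp (-α ^ 2 * ((n : ℝ) - 1) * p / 3) := by
  have hnbr : ∀ G, nbrFinset G u ∩ univ.erase u = nbrFinset G u := fun G =>
    inter_eq_left.2 fun v hv => mem_erase.2 ⟨(mem_nbrFinset.1 hv).ne', mem_univ v⟩
  have hcard : (#(univ.erase u) : ℝ) = n - 1 := by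
    rw [card_erase_of_mem (mem_univ u), card_univ, Fintype.card_fin, Nat.cast_pred u.pos]
  simpa only [hnbr, hcard] using
    erProb_lt_card_nbrFinset_inter_le hp0 hp1 hα0 hα1 (notMem_erase u univ)

end ErdosRenyi

theorem div_three_mul_le_of_le_of_le {n c p α γ d i : ℝ} (hp : 0 ≤ p) (hα0 : 0 ≤ α)
    (hα1 : α ≤ 1 / 5) (hγ : 0 ≤ γ) (hn : 0 ≤ n) (hcγ : γ * n / 2 ≤ c)
    (hd : d ≤ (1 + α) * (n - 1) * p) (hi : (1 - α) * c * p ≤ i) : γ / 3 * d ≤ i := by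
  have hγp : 0 ≤ γ * p := mul_nonneg hγ hp
  calc γ / 3 * d ≤ γ / 3 * ((1 + α) * (n - 1) * p) := by gcongr
    _ ≤ (1 - α) * (γ * n / 2) * p := by
        nlinarith [mul_nonneg (mul_nonneg hγp hn) (by linarith : (0 : ℝ) ≤ 1 - 5 * α)]
    _ ≤ (1 - α) * c * p := by gcongr; linarith
    _ ≤ i := hi

theorem stmt7_general (n : ℕ) (p α γ : ℝ) (hp0 : 0 < p) (hp1 : p < 1)
    (hα0 : 0 < α) (hα1 : α ≤ 1 / 5) (hγ0 : 0 < γ)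
    (C : Finset (Fin n)) (c : ℕ) (hc : C.card = c) (hcγ : γ * n / 2 ≤ (c : ℝ)) :
    1 - (n : ℝ) * Real.exp (-α ^ 2 * ((n : ℝ) - 1) * p / 3)
      - (n : ℝ) * Real.exp (-α ^ 2 * (c : ℝ) * p / 3) ≤
    erProb n p {G | ∀ u : Fin n, u ∉ C →
      ((nbrFinset G u).card : ℝ) ≤ (1 + α) * ((n : ℝ) - 1) * p ∧
      (1 - α) * (c : ℝ) * p ≤ ((nbrFinset G u ∩ C).card : ℝ) ∧
      (γ / 3) * ((nbrFinset G u).card : ℝ) ≤ ((nbrFinset G u ∩ C).card : ℝ)} := by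
  subst hc
  set e₁ := exp (-α ^ 2 * ((n : ℝ) - 1) * p / 3)
  set e₂ := exp (-α ^ 2 * (#C : ℝ) * p / 3)
  set bad : Fin n → Set (SimpleGraph (Fin n)) := fun u =>
    {G | (1 + α) * ((n : ℝ) - 1) * p < #(nbrFinset G u)} ∪
      {G | #(nbrFinset G u ∩ C) < (1 - α) * #C * p}
  have hbad : ∀ u ∈ univ \ C, erProb n p (bad u) ≤ e₁ + e₂ := fun u hu =>
    (erProb_union_le hp0.le hp1.le _ _).trans <| add_le_add
      (erProb_lt_card_nbrFinset_le hp0.le hp1.le hα0.le hα1 u)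
      (erProb_card_nbrFinset_inter_lt_le hp0.le hp1.le hα0.le hα1 (mem_sdiff.1 hu).2)
  have hcard : (#(univ \ C) : ℝ) ≤ n := by
    exact_mod_cast (card_le_univ _).trans_eq (Fintype.card_fin n)
  refine le_trans ?_ (erProb_mono hp0.le hp1.le (A := (⋃ u ∈ univ \ C, bad u)ᶜ)
    fun G hG u hu => ?_)
  · calc 1 - n * e₁ - n * e₂ ≤ 1 - ∑ u ∈ univ \ C, (e₁ + e₂) := by
          rw [sum_const, nsmul_eq_mul]
          nlinarith [show 0 < e₁ from exp_pos _, show 0 < e₂ from exp_pos _]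
      _ ≤ 1 - erProb n p (⋃ u ∈ univ \ C, bad u) := by
          linarith [erProb_biUnion_le hp0.le hp1.le (univ \ C) bad, sum_le_sum hbad]
      _ = erProb n p (⋃ u ∈ univ \ C, bad u)ᶜ := (erProb_compl _).symm
  · simp only [Set.mem_compl_iff, Set.mem_iUnion, not_exists, bad, Set.mem_union,
      Set.mem_ofPred_eq, not_or, not_lt] at hG
    obtain ⟨hdeg, hcap⟩ := hG u (mem_sdiff.2 ⟨mem_univ u, hu⟩)
    exact ⟨hdeg, hcap, div_three_mul_le_of_le_of_le hp0.le hα0.le hα1 hγ0.le n.cast_nonneg hcγ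
      hdeg hcap⟩

/-- Let `n ≥ 2`, `p ∈ (0,1)`, `α ∈ (0,1/5]`, `γ ∈ (0,1]`, let
`C ⊆ {1,…,n}` be a fixed set of size `c ≥ γn/2`, and let `G* ∼ G(n,p)`.  Then with
probability at least `1 − n·exp(−α²(n−1)p/3) − n·exp(−α²cp/3)`, every vertex `u ∉ C`
satisfies `|N(u)| ≤ (1+α)(n−1)p` and `|N(u) ∩ C| ≥ (1−α)cp`, and consequently
`|N(u) ∩ C| ≥ (γ/3)|N(u)|`. -/
theorem stmt7 (n : ℕ) (hn : 2 ≤ n) (p α γ : ℝ) (hp0 : 0 < p) (hp1 : p < 1)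
    (hα0 : 0 < α) (hα1 : α ≤ 1 / 5) (hγ0 : 0 < γ) (hγ1 : γ ≤ 1)
    (C : Finset (Fin n)) (c : ℕ) (hc : C.card = c) (hcγ : γ * n / 2 ≤ (c : ℝ)) :
    1 - (n : ℝ) * Real.exp (-α ^ 2 * ((n : ℝ) - 1) * p / 3)
      - (n : ℝ) * Real.exp (-α ^ 2 * (c : ℝ) * p / 3) ≤
    erProb n p {G | ∀ u : Fin n, u ∉ C →
      ((nbrFinset G u).card : ℝ) ≤ (1 + α) * ((n : ℝ) - 1) * p ∧
      (1 - α) * (c : ℝ) * p ≤ ((nbrFinset G u ∩ C).card : ℝ) ∧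
      (γ / 3) * ((nbrFinset G u).card : ℝ) ≤ ((nbrFinset G u ∩ C).card : ℝ)} :=
  stmt7_general n p α γ hp0 hp1 hα0 hα1 hγ0 C c hc hcγ
end

section
/- Let n ≥ 2, p > 0, let A be a real symmetric n×n matrix, u := n^{−1/2}(1,…,1) ∈ ℝⁿ, and suppose ‖A − (pn·uuᵀ − p·Iₙ)‖₂ ≤ β. Let v₁ be a unit-norm eigenvector of A with eigenvalue λ₁(A), the largest eigenvalue of A. Then (uᵀv₁)² ≥ λ₁(A)/(pn) − 1/n − β/(pn). -/
/-! Test the quadratic form of `A - (pn·uuᵀ - p·Iₙ)` on the unit eigenvector `v₁`: it equals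
`λ₁ + p - pn (uᵀv₁)²`, and it is at most the spectral norm `β`. -/

open Matrix

section RayleighQuotient

variable {n : Type*} [Fintype n] [DecidableEq n]

lemma Matrix.dotProduct_mulVec_le_norm_toEuclideanCLM_mul (B : Matrix n n ℝ) (v : n → ℝ) :
    v ⬝ᵥ B *ᵥ v ≤ ‖toEuclideanCLM (𝕜 := ℝ) B‖ * (v ⬝ᵥ v) := by
  set x : EuclideanSpace ℝ n := WithLp.toLp 2 v
  have hx : ‖x‖ ^ 2 = v ⬝ᵥ v := by
    rw [← real_inner_self_eq_norm_sq, EuclideanSpace.inner_toLp_toLp, star_trivial]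
  rw [← inner_toEuclideanCLM, ← hx]
  calc inner ℝ x (toEuclideanCLM (𝕜 := ℝ) B x)
      ≤ ‖x‖ * ‖toEuclideanCLM (𝕜 := ℝ) B x‖ := real_inner_le_norm _ _
    _ ≤ ‖x‖ * (‖toEuclideanCLM (𝕜 := ℝ) B‖ * ‖x‖) := by
        gcongr
        exact (toEuclideanCLM (𝕜 := ℝ) B).le_opNorm x
    _ = ‖toEuclideanCLM (𝕜 := ℝ) B‖ * ‖x‖ ^ 2 := by ring

lemma Matrix.dotProduct_mulVec_sub_smul_vecMulVec_sub_smul_one {R : Type*} [CommRing R]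
    {A : Matrix n n R} {μ : R} {v : n → R} (hv : A *ᵥ v = μ • v) (s p : R) (w : n → R) :
    v ⬝ᵥ (A - (s • vecMulVec w w - p • 1)) *ᵥ v = (μ + p) * (v ⬝ᵥ v) - s * (w ⬝ᵥ v) ^ 2 := by
  simp only [sub_mulVec, smul_mulVec, one_mulVec, hv, vecMulVec_mulVec, dotProduct_sub,
    dotProduct_smul, op_smul_eq_smul, smul_eq_mul, dotProduct_comm v w]
  ring

end RayleighQuotient

theorem stmt10_general (n : ℕ) (p β : ℝ) (hp : 0 < p)
    (A : Matrix (Fin n) (Fin n) ℝ)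
    (hnorm : ‖Matrix.toEuclideanCLM (𝕜 := ℝ)
        (A - ((p * n) • Matrix.vecMulVec (fun _ : Fin n => (Real.sqrt n)⁻¹)
            (fun _ : Fin n => (Real.sqrt n)⁻¹)
          - p • (1 : Matrix (Fin n) (Fin n) ℝ)))‖ ≤ β)
    (lam1 : ℝ)
    (v₁ : Fin n → ℝ) (hv : A.mulVec v₁ = lam1 • v₁) (hunit : ∑ i, v₁ i ^ 2 = 1) :
    lam1 / (p * n) - 1 / n - β / (p * n) ≤ (∑ i, (Real.sqrt n)⁻¹ * v₁ i) ^ 2 := by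
  have hv₁ : v₁ ⬝ᵥ v₁ = 1 := by simpa only [dotProduct, sq] using hunit
  have hn : (0 : ℝ) < n := by
    rcases Nat.eq_zero_or_pos n with rfl | hn
    · simp at hv₁
    · exact_mod_cast hn
  set c := ∑ i, (Real.sqrt n)⁻¹ * v₁ i
  have hquad : lam1 + p - p * n * c ^ 2 ≤ β := by
    have h := dotProduct_mulVec_le_norm_toEuclideanCLM_mul
      (A - ((p * n) • vecMulVec (fun _ : Fin n => (Real.sqrt n)⁻¹)
        (fun _ : Fin n => (Real.sqrt n)⁻¹) - p • 1)) v₁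
    rw [dotProduct_mulVec_sub_smul_vecMulVec_sub_smul_one hv, hv₁] at h
    change (lam1 + p) * 1 - p * n * c ^ 2 ≤ _ at h
    linarith
  rw [show lam1 / (p * n) - 1 / n - β / (p * n) = (lam1 - p - β) / (p * n) by field_simp,
    div_le_iff₀ (by positivity)]
  linarith

/-- Let `n ≥ 2`, `p > 0`, let `A` be a real symmetric `n×n` matrix,
`u := n^{−1/2}(1,…,1)`, and suppose `‖A − (pn·uuᵀ − p·Iₙ)‖₂ ≤ β` (spectral norm).  Let `v₁`
be a unit-norm eigenvector of `A` with eigenvalue `λ₁(A)`, the largest eigenvalue of `A`.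
Then `(uᵀv₁)² ≥ λ₁(A)/(pn) − 1/n − β/(pn)`. -/
theorem stmt10 (n : ℕ) (hn : 2 ≤ n) (p β : ℝ) (hp : 0 < p)
    (A : Matrix (Fin n) (Fin n) ℝ) (hA : A.IsHermitian)
    (hnorm : ‖Matrix.toEuclideanCLM (𝕜 := ℝ)
        (A - ((p * n) • Matrix.vecMulVec (fun _ : Fin n => (Real.sqrt n)⁻¹)
            (fun _ : Fin n => (Real.sqrt n)⁻¹)
          - p • (1 : Matrix (Fin n) (Fin n) ℝ)))‖ ≤ β)
    (lam1 : ℝ) (hmax : ∀ i, hA.eigenvalues i ≤ lam1) (hex : ∃ i, hA.eigenvalues i = lam1)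
    (v₁ : Fin n → ℝ) (hv : A.mulVec v₁ = lam1 • v₁) (hunit : ∑ i, v₁ i ^ 2 = 1) :
    lam1 / (p * n) - 1 / n - β / (p * n) ≤ (∑ i, (Real.sqrt n)⁻¹ * v₁ i) ^ 2 :=
  stmt10_general n p β hp A hnorm lam1 v₁ hv hunit
end

section
/- Let n ≥ 1 and p > 0, let A be a symmetric n×n real matrix with nonnegative entries whose row sums all lie in the interval [(1−δ₀)pn, (1+δ₀)pn], where δ₀ ≥ 0, and suppose its largest eigenvalue λ₁ lies in [(1−δ₁)pn, (1+δ₁)pn] with 0 ≤ δ₁ < 1. Set δ₀' := (1+δ₀)/(1−δ₁) − 1 and assume δ₀' > 0, and let u := n^{−1/2}(1,…,1). Then for every integer k with 0 ≤ k ≤ 1 + 1/(2δ₀'), every coordinate of the vector λ₁^{−k}·Aᵏu lies in the interval [(1−2kδ₀')/√n, (1+2kδ₀')/√n]. -/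
/-!
Dividing `A` by `λ₁` gives a nonnegative matrix whose row sums lie in `[1 - δ₀', 1 + δ₀']`
(the eigenvalue window converts the degree window `(1 ± δ₀)pn` into `(1 ± δ₀')λ₁`). Applying
such a matrix to a vector with coordinates in `[(1 - 2kδ₀')c, (1 + 2kδ₀')c]` multiplies
the bounds by `1 ∓ δ₀'`, and as long as `2kδ₀' ≤ 1` the error `(1 + δ₀')(1 + 2kδ₀') - 1` is at
most `2(k + 1)δ₀'`.
-/

open Finset Set Matrix

theorem Matrix.mulVec_apply_mem_Icc_of_nonneg {ι κ : Type*} [Fintype κ] {A : Matrix ι κ ℝ}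
    (hA : ∀ i j, 0 ≤ A i j) {v : κ → ℝ} {r R L U : ℝ} (hL : 0 ≤ L) (hU : 0 ≤ U)
    (hv : ∀ j, v j ∈ Icc L U) {i : ι} (hrow : ∑ j, A i j ∈ Icc r R) :
    (A *ᵥ v) i ∈ Icc (r * L) (R * U) := by
  simp only [Matrix.mulVec, dotProduct]
  constructor
  · calc r * L ≤ (∑ j, A i j) * L := mul_le_mul_of_nonneg_right hrow.1 hL
      _ = ∑ j, A i j * L := Finset.sum_mul ..
      _ ≤ ∑ j, A i j * v j := sum_le_sum fun j _ => mul_le_mul_of_nonneg_left (hv j).1 (hA i j)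
  · calc ∑ j, A i j * v j ≤ ∑ j, A i j * U :=
          sum_le_sum fun j _ => mul_le_mul_of_nonneg_left (hv j).2 (hA i j)
      _ = (∑ j, A i j) * U := (Finset.sum_mul ..).symm
      _ ≤ R * U := mul_le_mul_of_nonneg_right hrow.2 hU

theorem Matrix.pow_mulVec_const_mem_Icc {ι : Type*} [Fintype ι] [DecidableEq ι]
    {B : Matrix ι ι ℝ} (hB : ∀ i j, 0 ≤ B i j) {ε c : ℝ} (hε : 0 ≤ ε) (hc : 0 ≤ c)
    (hrow : ∀ i, ∑ j, B i j ∈ Icc (1 - ε) (1 + ε)) (k : ℕ) (hk : 2 * ((k : ℝ) - 1) * ε ≤ 1)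
    (i : ι) : (B ^ k *ᵥ fun _ => c) i ∈ Icc ((1 - 2 * k * ε) * c) ((1 + 2 * k * ε) * c) := by
  induction k generalizing i with
  | zero => simp
  | succ k ih =>
    push_cast at hk ⊢
    have hkε : 2 * k * ε ≤ 1 := by linarith
    have hk0 : (0 : ℝ) ≤ k := k.cast_nonneg
    have hprev := ih (by nlinarith)
    rw [pow_succ', ← Matrix.mulVec_mulVec]
    have hstep := Matrix.mulVec_apply_mem_Icc_of_nonneg hB (by nlinarith) (by positivity)
      hprev (hrow i)
    -- the quadratic terms `2kε²` have a favourable sign below and are `≤ ε` above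
    constructor
    · nlinarith [hstep.1, mul_nonneg (mul_nonneg hk0 (mul_nonneg hε hε)) hc]
    · nlinarith [hstep.2, mul_nonneg (mul_nonneg hε (sub_nonneg.2 hkε)) hc]

theorem Icc_mul_subset_Icc_mul_of_mem_Icc {s l δ₀ δ₁ ε : ℝ} (hs : 0 ≤ s) (hδ₁ : 0 ≤ δ₁)
    (hε : 0 ≤ ε) (hεδ : (1 + ε) * (1 - δ₁) = 1 + δ₀) (hl : l ∈ Icc ((1 - δ₁) * s) ((1 + δ₁) * s)) :
    Icc ((1 - δ₀) * s) ((1 + δ₀) * s) ⊆ Icc ((1 - ε) * l) ((1 + ε) * l) := by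
  refine Icc_subset_Icc ?_ ?_
  · rcases le_total ε 1 with h | h
    · nlinarith [mul_le_mul_of_nonneg_left hl.2 (sub_nonneg.2 h), mul_nonneg hε (mul_nonneg hδ₁ hs)]
    · nlinarith [mul_le_mul_of_nonneg_left hl.1 (sub_nonneg.2 h), mul_nonneg hδ₁ hs]
  · nlinarith [mul_le_mul_of_nonneg_left hl.1 (by linarith : (0 : ℝ) ≤ 1 + ε)]

theorem stmt11_general (n : ℕ) (hn : 1 ≤ n) (p : ℝ) (hp : 0 < p) (δ₀ δ₁ : ℝ)
    (hδ₁0 : 0 ≤ δ₁) (hδ₁1 : δ₁ < 1)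
    (A : Matrix (Fin n) (Fin n) ℝ)
    (hpos : ∀ i j, 0 ≤ A i j)
    (hrow : ∀ i, (1 - δ₀) * (p * n) ≤ ∑ j, A i j ∧ ∑ j, A i j ≤ (1 + δ₀) * (p * n))
    (lam1 : ℝ)
    (hlam : (1 - δ₁) * (p * n) ≤ lam1 ∧ lam1 ≤ (1 + δ₁) * (p * n))
    (hδ₀' : 0 < (1 + δ₀) / (1 - δ₁) - 1) :
    ∀ k : ℕ, (k : ℝ) ≤ 1 + 1 / (2 * ((1 + δ₀) / (1 - δ₁) - 1)) →
      ∀ i : Fin n,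
        (1 - 2 * k * ((1 + δ₀) / (1 - δ₁) - 1)) / Real.sqrt n ≤
            ((A ^ k).mulVec (fun _ : Fin n => (Real.sqrt n)⁻¹)) i / lam1 ^ k ∧
        ((A ^ k).mulVec (fun _ : Fin n => (Real.sqrt n)⁻¹)) i / lam1 ^ k ≤
            (1 + 2 * k * ((1 + δ₀) / (1 - δ₁) - 1)) / Real.sqrt n := by
  set ε := (1 + δ₀) / (1 - δ₁) - 1
  intro k hk i
  have hεδ : (1 + ε) * (1 - δ₁) = 1 + δ₀ := by
    rw [add_sub_cancel, div_mul_cancel₀ _ (by linarith)]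
  have hpn : 0 < p * n := mul_pos hp (by exact_mod_cast hn)
  have hlam1 : 0 < lam1 := by nlinarith [hlam.1]
  have hrowB : ∀ i, ∑ j, (lam1⁻¹ • A) i j ∈ Icc (1 - ε) (1 + ε) := fun i => by
    have := Icc_mul_subset_Icc_mul_of_mem_Icc hpn.le hδ₁0 hδ₀'.le hεδ hlam (hrow i)
    simp only [Matrix.smul_apply, smul_eq_mul, ← Finset.mul_sum]
    rw [mul_comm _ lam1, mul_comm _ lam1] at this
    exact ⟨(le_inv_mul_iff₀ hlam1).2 this.1, (inv_mul_le_iff₀ hlam1).2 this.2⟩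
  have hk' : 2 * ((k : ℝ) - 1) * ε ≤ 1 := by
    have := (le_div_iff₀ (by positivity)).mp (sub_le_iff_le_add'.mpr hk)
    linarith
  have := Matrix.pow_mulVec_const_mem_Icc (B := lam1⁻¹ • A) (c := (Real.sqrt n)⁻¹)
    (fun i j => mul_nonneg (inv_nonneg.2 hlam1.le) (hpos i j)) hδ₀'.le (by positivity) hrowB k hk' i
  rwa [smul_pow, Matrix.smul_mulVec, Pi.smul_apply, smul_eq_mul, inv_pow, inv_mul_eq_div,
    ← div_eq_mul_inv, ← div_eq_mul_inv] at this

/-- Let `n ≥ 1`, `p > 0`, let `A` be a symmetric `n×n` real matrix with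
nonnegative entries whose row sums all lie in `[(1−δ₀)pn, (1+δ₀)pn]` (`δ₀ ≥ 0`), and whose
largest eigenvalue `λ₁` lies in `[(1−δ₁)pn, (1+δ₁)pn]` (`0 ≤ δ₁ < 1`).  Set
`δ₀' := (1+δ₀)/(1−δ₁) − 1` and assume `δ₀' > 0`, and let `u := n^{−1/2}(1,…,1)`.
Then for every integer `k` with `0 ≤ k ≤ 1 + 1/(2δ₀')`, every coordinate of `λ₁^{−k}·Aᵏu`
lies in `[(1−2kδ₀')/√n, (1+2kδ₀')/√n]`. -/
theorem stmt11 (n : ℕ) (hn : 1 ≤ n) (p : ℝ) (hp : 0 < p) (δ₀ δ₁ : ℝ)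
    (hδ₀ : 0 ≤ δ₀) (hδ₁0 : 0 ≤ δ₁) (hδ₁1 : δ₁ < 1)
    (A : Matrix (Fin n) (Fin n) ℝ) (hA : A.IsHermitian)
    (hpos : ∀ i j, 0 ≤ A i j)
    (hrow : ∀ i, (1 - δ₀) * (p * n) ≤ ∑ j, A i j ∧ ∑ j, A i j ≤ (1 + δ₀) * (p * n))
    (lam1 : ℝ) (hmax : ∀ i, hA.eigenvalues i ≤ lam1) (hex : ∃ i, hA.eigenvalues i = lam1)
    (hlam : (1 - δ₁) * (p * n) ≤ lam1 ∧ lam1 ≤ (1 + δ₁) * (p * n))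
    (hδ₀' : 0 < (1 + δ₀) / (1 - δ₁) - 1) :
    ∀ k : ℕ, (k : ℝ) ≤ 1 + 1 / (2 * ((1 + δ₀) / (1 - δ₁) - 1)) →
      ∀ i : Fin n,
        (1 - 2 * k * ((1 + δ₀) / (1 - δ₁) - 1)) / Real.sqrt n ≤
            ((A ^ k).mulVec (fun _ : Fin n => (Real.sqrt n)⁻¹)) i / lam1 ^ k ∧
        ((A ^ k).mulVec (fun _ : Fin n => (Real.sqrt n)⁻¹)) i / lam1 ^ k ≤
            (1 + 2 * k * ((1 + δ₀) / (1 - δ₁) - 1)) / Real.sqrt n :=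
  stmt11_general n hn p hp δ₀ δ₁ hδ₁0 hδ₁1 A hpos hrow lam1 hlam hδ₀'
end

section
/- Let n ≥ 1 and p > 0, let A be a symmetric n×n real matrix with nonnegative entries whose row sums all lie in [(1−δ₀)pn, (1+δ₀)pn] with δ₀ ≥ 0, and whose largest eigenvalue λ₁ lies in [(1−δ₁)pn, (1+δ₁)pn] with 0 ≤ δ₁ < 1 (so λ₁ > 0). Set δ₀' := (1+δ₀)/(1−δ₁) − 1 and assume δ₀' > 0. Let u := n^{−1/2}(1,…,1), let v₁ be a unit-norm eigenvector of A for λ₁, assume c₁ := uᵀv₁ ≠ 0, and set λ(A) := max(λ₂(A), |λ_n(A)|) and ρ := λ(A)/λ₁. Then for every integer k with 0 ≤ k ≤ 1 + 1/(2δ₀'): ‖sign(c₁)·v₁ − u‖_∞ ≤ (1/|c₁| − 1)/√n + 2kδ₀'/(|c₁|·√n) + (√(1−c₁²)/|c₁|)·ρᵏ. -/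
/-!
Write `u = c₁ v₁ + w` with `w ⊥ v₁` and `‖w‖₂ = √(1 - c₁²)`, so that `Aᵏ u = c₁ λ₁ᵏ v₁ + Aᵏ w`.
The row sums of the nonnegative matrix `A` lie within a factor `1 ± δ₀'` of `λ₁`, so every entry of
`λ₁⁻ᵏ Aᵏ u` lies between `(1 - δ₀')ᵏ / √n` and `(1 + δ₀')ᵏ / √n`, hence within `2kδ₀' / √n` of
`1 / √n` as long as `2(k - 1)δ₀' ≤ 1`. In an orthonormal eigenbasis, `w` only has components along
eigenvalues of modulus at most `λ(A)`: if `λ₁ > λ₂` its eigenspace is spanned by `v₁`, and otherwise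
`λ₁ = λ₂ ≤ λ(A)`. Hence `|(Aᵏ w)ᵢ| ≤ ‖Aᵏ w‖₂ ≤ λ(A)ᵏ √(1 - c₁²)`, and dividing by `|c₁| λ₁ᵏ` the
triangle inequality gives the bound.
-/

open Matrix

lemma one_add_pow_le_one_add_two_mul_of_two_mul_le {x : ℝ} (hx : 0 ≤ x) {k : ℕ}
    (hk : 2 * ((k : ℝ) - 1) * x ≤ 1) : (1 + x) ^ k ≤ 1 + 2 * k * x := by
  induction k with
  | zero => simp
  | succ k ih =>
    push_cast at hk ⊢
    have ih' := ih (by nlinarith)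
    rw [pow_succ]
    nlinarith [mul_le_mul_of_nonneg_right ih' (by linarith : (0 : ℝ) ≤ 1 + x)]

lemma one_add_pow_le_one_add_two_mul {x : ℝ} (hx : 0 ≤ x) {k : ℕ}
    (hk : (k : ℝ) ≤ 1 + 1 / (2 * x)) : (1 + x) ^ k ≤ 1 + 2 * k * x := by
  refine one_add_pow_le_one_add_two_mul_of_two_mul_le hx ?_
  rcases hx.eq_or_lt with rfl | hx
  · simp
  · have := (le_div_iff₀ (by positivity)).mp (show (k : ℝ) - 1 ≤ 1 / (2 * x) by linarith)
    linarith

lemma one_sub_mul_le_max_one_sub_pow (x : ℝ) (k : ℕ) : 1 - k * x ≤ max (1 - x) 0 ^ k := by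
  rcases le_or_gt x 1 with hx | hx
  · rw [max_eq_left (by linarith)]
    simpa [sub_eq_add_neg] using one_add_mul_le_pow (a := -x) (by linarith) k
  · rcases k with _ | k
    · simp
    · have : (0 : ℝ) ≤ max (1 - x) 0 ^ (k + 1) := by positivity
      push_cast
      nlinarith

lemma one_sub_mul_le_and_le_one_add_mul {δ₀ δ₁ P r l : ℝ} (hδ₀ : 0 ≤ δ₀) (hδ₁0 : 0 ≤ δ₁)
    (hδ₁1 : δ₁ < 1) (hP : 0 ≤ P) (hr : (1 - δ₀) * P ≤ r ∧ r ≤ (1 + δ₀) * P)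
    (hl : (1 - δ₁) * P ≤ l ∧ l ≤ (1 + δ₁) * P) :
    (1 - ((1 + δ₀) / (1 - δ₁) - 1)) * l ≤ r ∧ r ≤ (1 + ((1 + δ₀) / (1 - δ₁) - 1)) * l := by
  have h1 : 0 < 1 - δ₁ := by linarith
  have hd : (1 + δ₀) / (1 - δ₁) * (1 - δ₁) = 1 + δ₀ := div_mul_cancel₀ _ h1.ne'
  set d := (1 + δ₀) / (1 - δ₁)
  have hd0 : 0 ≤ d := by positivity
  constructor
  -- `1 - δ₀' = 2 - d`: bound `l` from above when this is nonnegative, from below otherwise.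
  · rcases le_total d 2 with h | h
    · nlinarith [mul_le_mul_of_nonneg_left hl.2 (by linarith : 0 ≤ 2 - d), mul_nonneg hδ₁0 hP,
        mul_nonneg (mul_nonneg hδ₁0 hP) hd0]
    · nlinarith [mul_le_mul_of_nonpos_left hl.1 (by linarith : 2 - d ≤ 0), mul_nonneg hδ₁0 hP]
  · nlinarith [mul_le_mul_of_nonneg_left hl.1 hd0]

lemma abs_sign_mul_sub_le {c L v u y z E T : ℝ} (hc : c ≠ 0) (hc1 : |c| ≤ 1) (hL : 0 < L)
    (hu : 0 ≤ u) (hy : y = c * L * v + z) (hyu : |y - L * u| ≤ E * L * u) (hz : |z| ≤ T) :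
    |Real.sign c * v - u| ≤ (1 / |c| - 1) * u + E * u / |c| + T / L / |c| := by
  have hc0 : 0 < |c| := abs_pos.mpr hc
  have hsign : Real.sign c * |c| = c := by
    rcases hc.lt_or_gt with h | h
    · rw [Real.sign_of_neg h, abs_of_neg h, neg_one_mul, neg_neg]
    · rw [Real.sign_of_pos h, abs_of_pos h, one_mul]
  have hsplit :
      Real.sign c * v - u = (y - L * u) / L * |c|⁻¹ - z / L * |c|⁻¹ + (1 / |c| - 1) * u := by
    rw [show y = Real.sign c * |c| * L * v + z by rw [hsign, hy]]
    field_simp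
    ring
  have h1 : 0 ≤ (1 / |c| - 1) * u := mul_nonneg (by rw [sub_nonneg, le_div_iff₀ hc0]; linarith) hu
  have h2 : |(y - L * u) / L * |c|⁻¹| ≤ E * u / |c| := by
    rw [abs_mul, abs_div, abs_inv, abs_abs, abs_of_pos hL, ← div_eq_mul_inv]
    gcongr
    rw [div_le_iff₀ hL]; linarith
  have h3 : |z / L * |c|⁻¹| ≤ T / L / |c| := by
    rw [abs_mul, abs_div, abs_inv, abs_abs, abs_of_pos hL, ← div_eq_mul_inv]
    gcongr
  rw [hsplit]
  calc _ ≤ |(y - L * u) / L * |c|⁻¹| + |z / L * |c|⁻¹| + |(1 / |c| - 1) * u| :=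
        (abs_add_le _ _).trans (add_le_add_left (abs_sub _ _) _)
    _ ≤ _ := by rw [abs_of_nonneg h1]; linarith

section

variable {ι R : Type*} [Fintype ι] [CommRing R] (u : ι → R) {v : ι → R}

lemma Matrix.sub_dotProduct_smul_dotProduct_eq_zero (hv : v ⬝ᵥ v = 1) :
    (u - (u ⬝ᵥ v) • v) ⬝ᵥ v = 0 := by
  rw [sub_dotProduct, smul_dotProduct, hv, smul_eq_mul, mul_one, sub_self]

lemma Matrix.sub_dotProduct_smul_dotProduct_self (hv : v ⬝ᵥ v = 1) :
    (u - (u ⬝ᵥ v) • v) ⬝ᵥ (u - (u ⬝ᵥ v) • v) = u ⬝ᵥ u - (u ⬝ᵥ v) ^ 2 := by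
  simp only [sub_dotProduct, dotProduct_sub, smul_dotProduct, dotProduct_smul, hv,
    dotProduct_comm v u, smul_eq_mul]
  ring

end

lemma Matrix.const_inv_sqrt_dotProduct_self {n : ℕ} (hn : (n : ℝ) ≠ 0) :
    (fun _ => (√n)⁻¹ : Fin n → ℝ) ⬝ᵥ (fun _ => (√n)⁻¹) = 1 := by
  simp only [dotProduct, Finset.sum_const, Finset.card_univ, Fintype.card_fin, nsmul_eq_mul]
  rw [← mul_inv, Real.mul_self_sqrt n.cast_nonneg, mul_inv_cancel₀ hn]

section

variable {ι : Type*} [Fintype ι] {A : Matrix ι ι ℝ}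

lemma Matrix.mulVec_mem_Icc_of_nonneg (hA : ∀ i j, 0 ≤ A i j) {a b α β : ℝ} (hα : 0 ≤ α)
    (hβ : 0 ≤ β) (hrow : ∀ i, ∑ j, A i j ∈ Set.Icc a b) {x : ι → ℝ}
    (hx : ∀ j, x j ∈ Set.Icc α β) (i : ι) : (A *ᵥ x) i ∈ Set.Icc (a * α) (b * β) := by
  have hlo : (∑ j, A i j) * α ≤ (A *ᵥ x) i := by
    rw [Finset.sum_mul]
    exact Finset.sum_le_sum fun j _ => mul_le_mul_of_nonneg_left (hx j).1 (hA i j)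
  have hhi : (A *ᵥ x) i ≤ (∑ j, A i j) * β := by
    rw [Finset.sum_mul]
    exact Finset.sum_le_sum fun j _ => mul_le_mul_of_nonneg_left (hx j).2 (hA i j)
  exact ⟨(mul_le_mul_of_nonneg_right (hrow i).1 hα).trans hlo,
    hhi.trans (mul_le_mul_of_nonneg_right (hrow i).2 hβ)⟩

variable [DecidableEq ι]

lemma Matrix.pow_mulVec_const_mem_Icc_of_nonneg (hA : ∀ i j, 0 ≤ A i j) {a b c : ℝ} (ha : 0 ≤ a)
    (hb : 0 ≤ b) (hc : 0 ≤ c) (hrow : ∀ i, ∑ j, A i j ∈ Set.Icc a b) (k : ℕ) (i : ι) :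
    (A ^ k *ᵥ fun _ => c) i ∈ Set.Icc (a ^ k * c) (b ^ k * c) := by
  induction k generalizing i with
  | zero => simp
  | succ k ih =>
    rw [pow_succ' A, ← mulVec_mulVec, pow_succ' a, pow_succ' b, mul_assoc, mul_assoc]
    exact mulVec_mem_Icc_of_nonneg hA (by positivity) (by positivity) hrow ih i

lemma Matrix.abs_pow_mulVec_const_sub_le (hA : ∀ i j, 0 ≤ A i j) {l δ c : ℝ} (hl : 0 ≤ l)
    (hδ : 0 ≤ δ) (hc : 0 ≤ c) (hrow : ∀ i, (1 - δ) * l ≤ ∑ j, A i j ∧ ∑ j, A i j ≤ (1 + δ) * l)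
    {k : ℕ} (hk : (k : ℝ) ≤ 1 + 1 / (2 * δ)) (i : ι) :
    |(A ^ k *ᵥ fun _ => c) i - l ^ k * c| ≤ 2 * k * δ * l ^ k * c := by
  -- `(1 - δ) * l` may be negative; the row sums of a nonnegative matrix are not.
  have hrow' : ∀ i, ∑ j, A i j ∈ Set.Icc (max (1 - δ) 0 * l) ((1 + δ) * l) := fun i =>
    ⟨by rw [max_mul_of_nonneg _ _ hl, zero_mul]
        exact max_le (hrow i).1 (Finset.sum_nonneg fun j _ => hA i j), (hrow i).2⟩
  obtain ⟨hlo, hhi⟩ :=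
    pow_mulVec_const_mem_Icc_of_nonneg hA (by positivity) (by positivity) hc hrow' k i
  rw [mul_pow] at hlo hhi
  have hlk : 0 ≤ l ^ k * c := by positivity
  have h1 := mul_le_mul_of_nonneg_right (one_sub_mul_le_max_one_sub_pow δ k) hlk
  have h2 := mul_le_mul_of_nonneg_right (one_add_pow_le_one_add_two_mul hδ hk) hlk
  have h3 : 0 ≤ k * δ * (l ^ k * c) := by positivity
  rw [abs_le]
  constructor <;> nlinarith

lemma Matrix.pow_mulVec_of_mulVec_eq_smul {v : ι → ℝ} {μ : ℝ} (hv : A *ᵥ v = μ • v) (k : ℕ) :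
    (A ^ k) *ᵥ v = μ ^ k • v := by
  induction k with
  | zero => simp
  | succ k ih => rw [pow_succ', ← mulVec_mulVec, ih, mulVec_smul, hv, smul_smul, ← pow_succ]

end

namespace Matrix.IsHermitian

variable {ι : Type*} [Fintype ι] [DecidableEq ι] {A : Matrix ι ι ℝ} (hA : A.IsHermitian)
include hA

lemma eigenvectorBasis_repr_mulVec (x : ι → ℝ) (j : ι) :
    hA.eigenvectorBasis.repr (WithLp.toLp 2 (A *ᵥ x)) j
      = hA.eigenvalues j * hA.eigenvectorBasis.repr (WithLp.toLp 2 x) j := by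
  simp only [OrthonormalBasis.repr_apply_apply, EuclideanSpace.inner_eq_star_dotProduct,
    star_trivial]
  rw [dotProduct_comm, dotProduct_mulVec, ← mulVec_transpose,
    ← conjTranspose_eq_transpose_of_trivial, hA.eq, hA.mulVec_eigenvectorBasis, smul_dotProduct,
    dotProduct_comm, smul_eq_mul]

lemma eigenvectorBasis_repr_pow_mulVec (k : ℕ) (x : ι → ℝ) (j : ι) :
    hA.eigenvectorBasis.repr (WithLp.toLp 2 (A ^ k *ᵥ x)) j
      = hA.eigenvalues j ^ k * hA.eigenvectorBasis.repr (WithLp.toLp 2 x) j := by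
  induction k with
  | zero => simp
  | succ k ih =>
    rw [pow_succ', ← mulVec_mulVec, hA.eigenvectorBasis_repr_mulVec, ih, pow_succ', mul_assoc]

lemma norm_pow_mulVec_le {t : ℝ} (ht : 0 ≤ t) {x : ι → ℝ}
    (hx : ∀ j, hA.eigenvectorBasis.repr (WithLp.toLp 2 x) j ≠ 0 → |hA.eigenvalues j| ≤ t)
    (k : ℕ) : ‖WithLp.toLp 2 (A ^ k *ᵥ x)‖ ≤ t ^ k * ‖WithLp.toLp 2 x‖ := by
  rw [← hA.eigenvectorBasis.repr.norm_map, ← hA.eigenvectorBasis.repr.norm_map (WithLp.toLp 2 x)]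
  refine (sq_le_sq₀ (norm_nonneg _) (by positivity)).mp ?_
  rw [mul_pow, EuclideanSpace.real_norm_sq_eq, EuclideanSpace.real_norm_sq_eq, Finset.mul_sum]
  refine Finset.sum_le_sum fun j _ => ?_
  rw [hA.eigenvectorBasis_repr_pow_mulVec, mul_pow]
  by_cases hj : hA.eigenvectorBasis.repr (WithLp.toLp 2 x) j = 0
  · simp [hj]
  · rw [← sq_abs, abs_pow]
    gcongr
    exact hx j hj

lemma abs_pow_mulVec_apply_le {t : ℝ} (ht : 0 ≤ t) {x : ι → ℝ}
    (hx : ∀ j, hA.eigenvectorBasis.repr (WithLp.toLp 2 x) j ≠ 0 → |hA.eigenvalues j| ≤ t)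
    (k : ℕ) (i : ι) : |(A ^ k *ᵥ x) i| ≤ t ^ k * √(x ⬝ᵥ x) := by
  have h := (PiLp.norm_apply_le (WithLp.toLp 2 (A ^ k *ᵥ x)) i).trans
    (hA.norm_pow_mulVec_le ht hx k)
  simpa [EuclideanSpace.norm_eq, dotProduct, sq] using h

lemma eigenvectorBasis_repr_eq_zero_of_mulVec_eq_smul {v : ι → ℝ} {μ : ℝ} (hv : A *ᵥ v = μ • v)
    {j : ι} (hj : hA.eigenvalues j ≠ μ) : hA.eigenvectorBasis.repr (WithLp.toLp 2 v) j = 0 := by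
  have h := hA.eigenvectorBasis_repr_mulVec v j
  rw [hv, WithLp.toLp_smul, map_smul, PiLp.smul_apply, smul_eq_mul] at h
  have h' : (hA.eigenvalues j - μ) * hA.eigenvectorBasis.repr (WithLp.toLp 2 v) j = 0 := by
    linarith
  exact (mul_eq_zero.mp h').resolve_left (sub_ne_zero.mpr hj)

lemma eigenvectorBasis_repr_eq_zero_of_dotProduct_eq_zero {v w : ι → ℝ} {μ : ℝ}
    (hv : A *ᵥ v = μ • v) (hv0 : v ≠ 0) {j : ι} (hsimple : ∀ j' ≠ j, hA.eigenvalues j' ≠ μ)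
    (hw : w ⬝ᵥ v = 0) : hA.eigenvectorBasis.repr (WithLp.toLp 2 w) j = 0 := by
  have hvj : hA.eigenvectorBasis.repr (WithLp.toLp 2 v) j ≠ 0 := by
    intro hj
    refine hv0 (congrArg WithLp.ofLp (hA.eigenvectorBasis.repr.map_eq_zero_iff.mp ?_))
    ext j'
    obtain rfl | hj' := eq_or_ne j' j
    · exact hj
    · exact hA.eigenvectorBasis_repr_eq_zero_of_mulVec_eq_smul hv (hsimple j' hj')
  have hinner := hA.eigenvectorBasis.repr.inner_map_map (WithLp.toLp 2 v) (WithLp.toLp 2 w)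
  simp only [EuclideanSpace.inner_eq_star_dotProduct, star_trivial] at hinner
  rw [hw, dotProduct, Finset.sum_eq_single j (fun j' _ hj' => by
    rw [hA.eigenvectorBasis_repr_eq_zero_of_mulVec_eq_smul hv (hsimple j' hj'), mul_zero])
    (by simp)] at hinner
  exact (mul_eq_zero.mp hinner).resolve_right hvj

end Matrix.IsHermitian

lemma Matrix.IsHermitian.abs_eigenvalues_le_of_dotProduct_eq_zero {n : ℕ} (hn : 1 < n)
    {A : Matrix (Fin n) (Fin n) ℝ} (hA : A.IsHermitian) {ev : Fin n → ℝ}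
    {σ : Equiv.Perm (Fin n)} (hev : ev = hA.eigenvalues ∘ σ) (hsort : Antitone ev)
    {v w : Fin n → ℝ} (hv : A *ᵥ v = ev ⟨0, by omega⟩ • v) (hv0 : v ≠ 0) (hw : w ⬝ᵥ v = 0)
    {j : Fin n} (hj : hA.eigenvectorBasis.repr (WithLp.toLp 2 w) j ≠ 0) :
    |hA.eigenvalues j| ≤ max (ev ⟨1, by omega⟩) |ev ⟨n - 1, by omega⟩| := by
  have hμ : ∀ j', hA.eigenvalues j' = ev (σ.symm j') := by simp [hev]
  have hsecond : ∀ m, m ≠ ⟨0, by omega⟩ → ev m ≤ ev ⟨1, by omega⟩ := fun m hm =>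
    hsort (Fin.le_def.mpr (Nat.one_le_iff_ne_zero.mpr (Fin.val_ne_of_ne hm)))
  rw [abs_le]
  constructor
  · calc -max (ev ⟨1, by omega⟩) |ev ⟨n - 1, by omega⟩| ≤ -|ev ⟨n - 1, by omega⟩| :=
          neg_le_neg (le_max_right _ _)
      _ ≤ ev ⟨n - 1, by omega⟩ := neg_abs_le _
      _ ≤ hA.eigenvalues j := by
          rw [hμ j]; exact hsort (Fin.le_def.mpr (Nat.le_sub_one_of_lt (σ.symm j).isLt))
  · by_contra! hgt
    have hj0 : σ.symm j = ⟨0, by omega⟩ := by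
      by_contra hne
      exact (hsecond _ hne).not_gt ((le_max_left _ _).trans_lt (hμ j ▸ hgt))
    refine hj (hA.eigenvectorBasis_repr_eq_zero_of_dotProduct_eq_zero hv hv0 (fun j' hj' => ?_) hw)
    rw [hμ j', ← hj0, ← hμ j]
    refine (lt_of_le_of_lt (hsecond _ fun h => hj' ?_) ((le_max_left _ _).trans_lt hgt)).ne
    exact σ.symm.injective (h.trans hj0.symm)

/-- Let `n ≥ 2`, `p > 0`, let `A` be a symmetric `n×n` real matrix with
nonnegative entries whose row sums all lie in `[(1−δ₀)pn, (1+δ₀)pn]` (`δ₀ ≥ 0`) and whose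
largest eigenvalue `λ₁ = ev 0` lies in `[(1−δ₁)pn, (1+δ₁)pn]` (`0 ≤ δ₁ < 1`).  Set
`δ₀' := (1+δ₀)/(1−δ₁) − 1 > 0`, let `u := n^{−1/2}(1,…,1)`, let `v₁` be a unit-norm
eigenvector of `A` for `λ₁` with `c₁ := uᵀv₁ ≠ 0`, and set `λ(A) := max(λ₂(A), |λ_n(A)|)`
and `ρ := λ(A)/λ₁`.  Then for every integer `k` with `0 ≤ k ≤ 1 + 1/(2δ₀')`:
`‖sign(c₁)·v₁ − u‖_∞ ≤ (1/|c₁| − 1)/√n + 2kδ₀'/(|c₁|√n) + (√(1−c₁²)/|c₁|)·ρᵏ`. -/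
theorem stmt12 (n : ℕ) (hn : 2 ≤ n) (p : ℝ) (hp : 0 < p) (δ₀ δ₁ : ℝ)
    (hδ₀ : 0 ≤ δ₀) (hδ₁0 : 0 ≤ δ₁) (hδ₁1 : δ₁ < 1)
    (A : Matrix (Fin n) (Fin n) ℝ) (hA : A.IsHermitian)
    (hpos : ∀ i j, 0 ≤ A i j)
    (hrow : ∀ i, (1 - δ₀) * (p * n) ≤ ∑ j, A i j ∧ ∑ j, A i j ≤ (1 + δ₀) * (p * n))
    (ev : Fin n → ℝ) (σ : Equiv.Perm (Fin n))
    (hev : ev = hA.eigenvalues ∘ σ) (hsort : Antitone ev)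
    (hlam : (1 - δ₁) * (p * n) ≤ ev ⟨0, by omega⟩ ∧ ev ⟨0, by omega⟩ ≤ (1 + δ₁) * (p * n))
    (v₁ : Fin n → ℝ) (hv : A.mulVec v₁ = ev ⟨0, by omega⟩ • v₁) (hunit : ∑ i, v₁ i ^ 2 = 1)
    (hc1 : (∑ i, (Real.sqrt n)⁻¹ * v₁ i) ≠ 0) :
    ∀ k : ℕ, (k : ℝ) ≤ 1 + 1 / (2 * ((1 + δ₀) / (1 - δ₁) - 1)) →
      ∀ i : Fin n,
        |Real.sign (∑ i, (Real.sqrt n)⁻¹ * v₁ i) * v₁ i - (Real.sqrt n)⁻¹| ≤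
          (1 / |∑ i, (Real.sqrt n)⁻¹ * v₁ i| - 1) / Real.sqrt n
          + 2 * k * ((1 + δ₀) / (1 - δ₁) - 1)
              / (|∑ i, (Real.sqrt n)⁻¹ * v₁ i| * Real.sqrt n)
          + (Real.sqrt (1 - (∑ i, (Real.sqrt n)⁻¹ * v₁ i) ^ 2)
              / |∑ i, (Real.sqrt n)⁻¹ * v₁ i|)
            * (max (ev ⟨1, by omega⟩) |ev ⟨n - 1, by omega⟩| / ev ⟨0, by omega⟩) ^ k := by
  intro k hk i
  set u : Fin n → ℝ := fun _ => (√n)⁻¹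
  set c := ∑ i, (√n)⁻¹ * v₁ i
  set δ := (1 + δ₀) / (1 - δ₁) - 1
  set l := ev ⟨0, by omega⟩
  set t := max (ev ⟨1, by omega⟩) |ev ⟨n - 1, by omega⟩|
  set w := u - c • v₁
  have hn0 : (0 : ℝ) < n := by positivity
  have hl : 0 < l := lt_of_lt_of_le (mul_pos (by linarith) (mul_pos hp hn0)) hlam.1
  have hvv : v₁ ⬝ᵥ v₁ = 1 := by simpa [dotProduct, sq] using hunit
  have hww : w ⬝ᵥ w = 1 - c ^ 2 := by
    rw [← const_inv_sqrt_dotProduct_self hn0.ne']; exact sub_dotProduct_smul_dotProduct_self u hvv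
  have hc : |c| ≤ 1 :=
    (sq_le_one_iff_abs_le_one c).mp (by linarith [hww ▸ dotProduct_self_star_nonneg w])
  have hδ : 0 ≤ δ := by
    rw [sub_nonneg, le_div_iff₀ (by linarith)]; linarith
  have hmid := abs_pow_mulVec_const_sub_le hpos hl.le hδ (by positivity : (0:ℝ) ≤ (√n)⁻¹)
    (fun i => one_sub_mul_le_and_le_one_add_mul hδ₀ hδ₁0 hδ₁1 (by positivity) (hrow i) hlam) hk i
  have hv₁ : v₁ ≠ 0 := fun h => by simp [h] at hvv
  have htail : |(A ^ k *ᵥ w) i| ≤ t ^ k * √(w ⬝ᵥ w) :=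
    hA.abs_pow_mulVec_apply_le (by positivity) (fun _ hj =>
      hA.abs_eigenvalues_le_of_dotProduct_eq_zero hn hev hsort hv hv₁
        (sub_dotProduct_smul_dotProduct_eq_zero u hvv) hj) k i
  have hsplit : (A ^ k *ᵥ u) i = c * l ^ k * v₁ i + (A ^ k *ᵥ w) i := by
    simp only [w, mulVec_sub, mulVec_smul, pow_mulVec_of_mulVec_eq_smul hv, Pi.sub_apply,
      Pi.smul_apply, smul_eq_mul]
    ring
  refine (abs_sign_mul_sub_le hc1 hc (pow_pos hl k) (by positivity) hsplit hmid htail).trans_eq ?_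
  rw [hww, div_pow]
  field_simp
end
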